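/- Let n ≥ 3 and let f be a function defined on the n-cycle marginal scenario C_n (all singletons {i}, all consecutive pairs {i,i+1} with indices mod n, and ∅) satisfying: f(∅)=0, f({i}) ≥ 0, f({i}) ≤ f({i,i+1}), f({i+1}) ≤ f({i,i+1}), f({i,i+1}) ≤ f({i})+f({i+1}) for all i, and the n cycle inequalities f({i,i+1}) + Σ_{j≠i,i+1} f({j}) ≤ Σ_{j≠i} f({j,j+1}) for all i. Then f extends to a polymatroid on 2^{[n]}, i.e., there is a polymatroid g : 2^{[n]} → ℝ with g(S) = f(S) for all S ∈ C_n. -/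

import Mathlib

/-!
Put `c i = f {i} + f {i+1} - f {i, i+1} ≥ 0` and cut the cycle at an edge `i₀` minimising `c`,
so that the vertices become a path `1, …, n` with the cut edge joining its two ends. The extension
is a coverage function: a nonnegative combination of `S ↦ [S meets I]` over path intervals `I`.
The weights are the mixed second differences of `N u v = max t (E u v)`, where `t = c i₀` and
`E u v` is the least weight that the data force on the intervals containing both `u` and `v`.
Then `N k k = f {k}`, `N k (k+1) = c k`, and the cycle inequality at `i₀` says `N 1 n = t`, so
`g {1, n} = f {1} + f {n} - c i₀` as well. The weights are nonnegative because `E` is modular and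
decreases as the interval grows, while `max t` is convex.
-/

open Finset

section Polymatroid

variable {α : Type*} [DecidableEq α]

structure IsPolymatroid (g : Finset α → ℝ) : Prop where
  map_empty : g ∅ = 0
  mono : Monotone g
  submodular : ∀ S T, g (S ∩ T) + g (S ∪ T) ≤ g S + g T

theorem IsPolymatroid.nonneg {g : Finset α → ℝ} (hg : IsPolymatroid g) (S : Finset α) :
    0 ≤ g S :=
  hg.map_empty ▸ hg.mono (empty_subset S)

theorem IsPolymatroid.comp_image {β : Type*} [DecidableEq β] {g : Finset α → ℝ}
    (hg : IsPolymatroid g) {κ : β → α} (hκ : Function.Injective κ) :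
    IsPolymatroid fun S => g (S.image κ) where
  map_empty := by simpa using hg.map_empty
  mono _ _ h := hg.mono (image_subset_image h)
  submodular S T := by simpa [image_inter _ _ hκ, image_union] using hg.submodular _ _

end Polymatroid

section Coverage

variable {ι α : Type*} [DecidableEq α]

def coverage (s : Finset ι) (w : ι → ℝ) (A : ι → Finset α) (S : Finset α) : ℝ :=
  ∑ i ∈ s with ¬Disjoint S (A i), w i

variable {s : Finset ι} {w : ι → ℝ} {A : ι → Finset α}

theorem isPolymatroid_coverage (hw : ∀ i ∈ s, 0 ≤ w i) : IsPolymatroid (coverage s w A) where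
  map_empty := by simp [coverage]
  mono S T hST := sum_le_sum_of_subset_of_nonneg
    (monotone_filter_right s fun _ _ h hS => h (hS.mono_left hST))
    fun i hi _ => hw i (mem_filter.1 hi).1
  submodular S T := by
    classical
    have hunion : {i ∈ s | ¬Disjoint (S ∪ T) (A i)}
        = {i ∈ s | ¬Disjoint S (A i)} ∪ {i ∈ s | ¬Disjoint T (A i)} := by
      rw [← filter_or]; simp only [disjoint_union_left, not_and_or]
    have hinter : {i ∈ s | ¬Disjoint (S ∩ T) (A i)}
        ⊆ {i ∈ s | ¬Disjoint S (A i)} ∩ {i ∈ s | ¬Disjoint T (A i)} := by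
      rw [← filter_and]
      exact monotone_filter_right s fun _ _ h => ⟨fun hS => h (hS.mono_left inter_subset_left),
        fun hT => h (hT.mono_left inter_subset_right)⟩
    have hsum := sum_union_inter (s₁ := {i ∈ s | ¬Disjoint S (A i)})
      (s₂ := {i ∈ s | ¬Disjoint T (A i)}) (f := w)
    rw [← hunion] at hsum
    have := sum_le_sum_of_subset_of_nonneg hinter fun i hi _ =>
      hw i (mem_filter.1 (mem_inter.1 hi).1).1
    simp only [coverage]
    linarith

theorem coverage_singleton (x : α) : coverage s w A {x} = ∑ i ∈ s with x ∈ A i, w i := by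
  simp [coverage]

theorem coverage_pair (x y : α) :
    coverage s w A {x, y} = ∑ i ∈ s with x ∈ A i, w i + ∑ i ∈ s with y ∈ A i, w i
      - ∑ i ∈ s with x ∈ A i ∧ y ∈ A i, w i := by
  classical
  rw [eq_sub_iff_add_eq, filter_and, ← sum_union_inter, ← filter_or]
  simp only [coverage, insert_eq, disjoint_union_left, not_and_or, disjoint_singleton_left, not_not]

end Coverage

theorem max_add_max_le_max_add_max {t P Q A C : ℝ} (hP : P ≤ A) (hQ : Q ≤ A)
    (h : P + Q = A + C) : max t P + max t Q ≤ max t A + max t C := by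
  rcases le_total P t with hPt | hPt <;> rcases le_total Q t with hQt | hQt <;>
    simp only [max_eq_left, max_eq_right, hPt, hQt] <;>
    linarith [le_max_left t A, le_max_right t A, le_max_left t C, le_max_right t C]

theorem sum_Icc_sub_pred (G : ℕ → ℝ) (x : ℕ) :
    ∑ u ∈ Icc 1 x, (G u - G (u - 1)) = G x - G 0 := by
  induction x with
  | zero => simp
  | succ x ih => rw [sum_Icc_succ_top (by omega), ih, Nat.add_sub_cancel]; ring

theorem sum_Icc_sum_Icc_mixedDiff (N : ℕ → ℕ → ℝ) {x y m : ℕ} (hy : y ≤ m) :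
    ∑ u ∈ Icc 1 x, ∑ v ∈ Icc y m, (N u v - N (u - 1) v - N u (v + 1) + N (u - 1) (v + 1))
      = N x y - N 0 y - N x (m + 1) + N 0 (m + 1) := by
  have hinner (u : ℕ) : ∑ v ∈ Icc y m, (N u v - N (u - 1) v - N u (v + 1) + N (u - 1) (v + 1))
      = (N u y - N u (m + 1)) - (N (u - 1) y - N (u - 1) (m + 1)) := by
    calc _ = ∑ v ∈ Icc y m, ((N (u - 1) (v + 1) - N u (v + 1)) - (N (u - 1) v - N u v)) :=
          sum_congr rfl fun v _ => by ring
      _ = _ := by rw [sum_Icc_sub hy fun v => N (u - 1) v - N u v]; ring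
  simp only [hinner]
  rw [sum_Icc_sub_pred fun u => N u y - N u (m + 1)]
  ring

section PathExtension

variable (n : ℕ) (a d : ℕ → ℝ) (t : ℝ)

-- For `u ≤ v` this is `∑_{u ≤ j < v} d j - ∑_{u < k < v} a k`: intervals of total weight `a k`
-- at each `k` that cover each edge `(j, j + 1)` with weight `d j` must cover `[u, v]` with at
-- least this weight.
def pathExcess (u v : ℕ) : ℝ :=
  a u + ∑ j ∈ range v, (d j - a j) - ∑ j ∈ range u, (d j - a j)

def intervalLoad (u v : ℕ) : ℝ :=
  if 1 ≤ u ∧ v ≤ n then max t (pathExcess a d u v) else 0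

def intervalWeight (u v : ℕ) : ℝ :=
  intervalLoad n a d t u v - intervalLoad n a d t (u - 1) v
    - intervalLoad n a d t u (v + 1) + intervalLoad n a d t (u - 1) (v + 1)

variable {n a d t}

theorem pathExcess_self (u : ℕ) : pathExcess a d u u = a u := by
  simp [pathExcess]

theorem pathExcess_succ_right (u v : ℕ) :
    pathExcess a d u (v + 1) = pathExcess a d u v + (d v - a v) := by
  simp only [pathExcess, sum_range_succ]; ring

theorem pathExcess_succ_left (u v : ℕ) :
    pathExcess a d (u + 1) v = pathExcess a d u v + (a (u + 1) - d u) := by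
  simp only [pathExcess, sum_range_succ]; ring

theorem intervalLoad_nonneg (ht : 0 ≤ t) (u v : ℕ) : 0 ≤ intervalLoad n a d t u v := by
  unfold intervalLoad; split_ifs
  · exact ht.trans (le_max_left _ _)
  · exact le_rfl

theorem intervalLoad_succ_right_le (ht : 0 ≤ t) (hda : ∀ j, d j ≤ a j) (u v : ℕ) :
    intervalLoad n a d t u (v + 1) ≤ intervalLoad n a d t u v := by
  by_cases h : 1 ≤ u ∧ v + 1 ≤ n
  · rw [intervalLoad, intervalLoad, if_pos h, if_pos (by omega), pathExcess_succ_right]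
    exact max_le_max le_rfl (by linarith [hda v])
  · rw [intervalLoad, if_neg h]; exact intervalLoad_nonneg ht u v

theorem intervalLoad_le_succ_left (ht : 0 ≤ t) (hda' : ∀ j, d j ≤ a (j + 1)) (u v : ℕ) :
    intervalLoad n a d t u v ≤ intervalLoad n a d t (u + 1) v := by
  by_cases h : 1 ≤ u ∧ v ≤ n
  · rw [intervalLoad, intervalLoad, if_pos h, if_pos (by omega), pathExcess_succ_left]
    exact max_le_max le_rfl (by linarith [hda' u])
  · rw [intervalLoad, if_neg h]; exact intervalLoad_nonneg ht (u + 1) v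

theorem intervalWeight_nonneg (ht : 0 ≤ t) (hda : ∀ j, d j ≤ a j)
    (hda' : ∀ j, d j ≤ a (j + 1)) {u v : ℕ} (hu : 1 ≤ u) (hv : v ≤ n) :
    0 ≤ intervalWeight n a d t u v := by
  obtain ⟨u, rfl⟩ : ∃ u', u = u' + 1 := ⟨u - 1, by omega⟩
  have hout (x y : ℕ) (h : x = 0 ∨ n < y) : intervalLoad n a d t x y = 0 :=
    if_neg (by omega)
  rw [intervalWeight, Nat.add_sub_cancel]
  rcases Nat.eq_zero_or_pos u with rfl | hu0
  · rw [hout 0 v (by omega), hout 0 (v + 1) (by omega)]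
    linarith [intervalLoad_succ_right_le (n := n) ht hda 1 v]
  by_cases hvn : v = n
  · rw [hout (u + 1) (v + 1) (by omega), hout u (v + 1) (by omega)]
    linarith [intervalLoad_le_succ_left (n := n) ht hda' u v]
  · simp only [intervalLoad, if_pos (show 1 ≤ u + 1 ∧ v ≤ n by omega),
      if_pos (show 1 ≤ u ∧ v ≤ n by omega), if_pos (show 1 ≤ u + 1 ∧ v + 1 ≤ n by omega),
      if_pos (show 1 ≤ u ∧ v + 1 ≤ n by omega)]
    have := max_add_max_le_max_add_max (t := t)
      (P := pathExcess a d u v) (Q := pathExcess a d (u + 1) (v + 1))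
      (A := pathExcess a d (u + 1) v) (C := pathExcess a d u (v + 1))
      (by rw [pathExcess_succ_left]; linarith [hda' u])
      (by rw [pathExcess_succ_right]; linarith [hda v])
      (by simp only [pathExcess_succ_left, pathExcess_succ_right]; ring)
    linarith

theorem sum_intervalWeight_filter_mem {x y : ℕ} (hxy : x ≤ y) (hy : y ≤ n) :
    ∑ p ∈ Icc 1 n ×ˢ Icc 1 n with x ∈ Icc p.1 p.2 ∧ y ∈ Icc p.1 p.2,
      intervalWeight n a d t p.1 p.2 = intervalLoad n a d t x y := by
  have hfilter : {p ∈ Icc 1 n ×ˢ Icc 1 n | x ∈ Icc p.1 p.2 ∧ y ∈ Icc p.1 p.2}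
      = Icc 1 x ×ˢ Icc y n := by
    ext ⟨u, v⟩; simp only [mem_filter, mem_product, mem_Icc]; omega
  rw [hfilter, sum_product]
  simp only [intervalWeight]
  rw [sum_Icc_sum_Icc_mixedDiff _ hy]
  simp [intervalLoad]

theorem intervalLoad_self (htd : ∀ j, t ≤ d j) (hda : ∀ j, d j ≤ a j) {k : ℕ} (hk : k ∈ Icc 1 n) :
    intervalLoad n a d t k k = a k := by
  rw [mem_Icc] at hk
  rw [intervalLoad, if_pos hk, pathExcess_self, max_eq_right ((htd k).trans (hda k))]

theorem intervalLoad_succ (htd : ∀ j, t ≤ d j) {k : ℕ} (hk : k ∈ Ico 1 n) :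
    intervalLoad n a d t k (k + 1) = d k := by
  rw [mem_Ico] at hk
  rw [intervalLoad, if_pos (by omega), pathExcess_succ_right, pathExcess_self, add_sub_cancel,
    max_eq_right (htd k)]

theorem exists_path_polymatroid (hn : 1 ≤ n) (ht : 0 ≤ t) (htd : ∀ j, t ≤ d j)
    (hda : ∀ j, d j ≤ a j) (hda' : ∀ j, d j ≤ a (j + 1)) (hcyc : pathExcess a d 1 n ≤ t) :
    ∃ g : Finset ℕ → ℝ, IsPolymatroid g ∧ (∀ k ∈ Icc 1 n, g {k} = a k) ∧
      (∀ k ∈ Ico 1 n, g {k, k + 1} = a k + a (k + 1) - d k) ∧ g {n, 1} = a n + a 1 - t := by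
  have hsingle {x : ℕ} (hx : x ≤ n) :
      ∑ p ∈ Icc 1 n ×ˢ Icc 1 n with x ∈ Icc p.1 p.2, intervalWeight n a d t p.1 p.2
        = intervalLoad n a d t x x := by
    simpa only [and_self] using sum_intervalWeight_filter_mem le_rfl hx
  have hpair {x y : ℕ} (hxy : x ≤ y) (hy : y ≤ n) :
      coverage (Icc 1 n ×ˢ Icc 1 n) (fun p => intervalWeight n a d t p.1 p.2)
        (fun p => Icc p.1 p.2) {x, y}
      = intervalLoad n a d t x x + intervalLoad n a d t y y - intervalLoad n a d t x y := by
    rw [coverage_pair, hsingle (hxy.trans hy), hsingle hy, sum_intervalWeight_filter_mem hxy hy]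
  refine ⟨coverage (Icc 1 n ×ˢ Icc 1 n) (fun p => intervalWeight n a d t p.1 p.2)
    (fun p => Icc p.1 p.2), isPolymatroid_coverage fun p hp => ?_, fun k hk => ?_,
    fun k hk => ?_, ?_⟩
  · simp only [mem_product, mem_Icc] at hp
    exact intervalWeight_nonneg ht hda hda' hp.1.1 hp.2.2
  · rw [coverage_singleton, hsingle (mem_Icc.1 hk).2, intervalLoad_self htd hda hk]
  · have hk' := mem_Ico.1 hk
    rw [hpair k.le_succ hk'.2, intervalLoad_self htd hda (mem_Icc.2 ⟨hk'.1, hk'.2.le⟩),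
      intervalLoad_self htd hda (mem_Icc.2 ⟨by omega, hk'.2⟩), intervalLoad_succ htd hk]
  · rw [pair_comm, hpair hn le_rfl, intervalLoad_self htd hda (mem_Icc.2 ⟨le_rfl, hn⟩),
      intervalLoad_self htd hda (mem_Icc.2 ⟨hn, le_rfl⟩), intervalLoad, if_pos ⟨le_rfl, le_rfl⟩,
      max_eq_left hcyc]
    ring

end PathExtension

section Cycle

open Fin.NatCast

variable {n : ℕ} [NeZero n]

def edgeOverlap (f : Finset (Fin n) → ℝ) (i : Fin n) : ℝ := f {i} + f {i + 1} - f {i, i + 1}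

theorem sum_range_add_natCast (F : Fin n → ℝ) (i₀ : Fin n) :
    ∑ j ∈ range n, F (i₀ + (j : Fin n)) = ∑ i, F i := by
  rw [← Fin.sum_univ_eq_sum_range (fun j => F (i₀ + (j : Fin n))) n]
  simp only [Fin.cast_val_eq_self]
  exact Equiv.sum_comp (Equiv.addLeft i₀) F

-- The position of `i` on the path `i₀ + 1, i₀ + 2, …, i₀ + n = i₀` obtained by cutting the
-- cycle between `i₀` and `i₀ + 1`.
def pathPos (i₀ i : Fin n) : ℕ := (i - i₀ - 1).val + 1

theorem add_pathPos (i₀ i : Fin n) : i₀ + (pathPos i₀ i : Fin n) = i := by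
  simp only [pathPos, Nat.cast_succ, Fin.cast_val_eq_self]
  abel

theorem pathPos_injective (i₀ : Fin n) : Function.Injective (pathPos i₀) :=
  fun i j h => by rw [← add_pathPos i₀ i, h, add_pathPos]

theorem pathPos_mem_Icc (i₀ i : Fin n) : pathPos i₀ i ∈ Icc 1 n := by
  have := (i - i₀ - 1).isLt
  simp only [pathPos, mem_Icc]
  omega

theorem pathPos_add_one {i₀ i : Fin n} (h : pathPos i₀ i < n) :
    pathPos i₀ (i + 1) = pathPos i₀ i + 1 := by
  simp only [pathPos] at h ⊢
  rw [show i + 1 - i₀ - 1 = i - i₀ - 1 + 1 by abel, Fin.val_add_one_of_lt' h]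

theorem pathPos_add_one_self (i₀ : Fin n) : pathPos i₀ (i₀ + 1) = 1 := by
  simp [pathPos]

theorem eq_of_pathPos_eq {i₀ i : Fin n} (h : pathPos i₀ i = n) : i = i₀ := by
  rw [← add_pathPos i₀ i, h, Fin.natCast_self, add_zero]

theorem pathExcess_le_of_cycle_ineq (f : Finset (Fin n) → ℝ) (i₀ : Fin n)
    (hne : (1 : Fin n) ≠ 0)
    (hcyc : f {i₀, i₀ + 1} + ∑ j ∈ univ \ {i₀, i₀ + 1}, f {j}
      ≤ ∑ j ∈ univ \ {i₀}, f {j, j + 1}) :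
    pathExcess (fun k => f {i₀ + (k : Fin n)}) (fun k => edgeOverlap f (i₀ + (k : Fin n))) 1 n
      ≤ edgeOverlap f i₀ := by
  have hrot := sum_range_add_natCast (fun i => edgeOverlap f i - f {i}) i₀
  have hshift : ∑ i, f {i + 1} = ∑ i, f {i} := Equiv.sum_comp (Equiv.addRight 1) fun i => f {i}
  rw [sum_sdiff_eq_sub (subset_univ _), sum_pair (by simpa using hne.symm),
    sum_sdiff_eq_sub (subset_univ _), sum_singleton] at hcyc
  simp only [pathExcess, sum_range_one, Nat.cast_zero, Nat.cast_one, add_zero, hrot]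
  simp only [edgeOverlap, sum_sub_distrib, sum_add_distrib, hshift] at hrot ⊢
  linarith

theorem exists_cycle_polymatroid (f : Finset (Fin n) → ℝ) (hne : (1 : Fin n) ≠ 0)
    (hleft : ∀ i, f {i} ≤ f {i, i + 1}) (hright : ∀ i, f {i + 1} ≤ f {i, i + 1})
    (hsub : ∀ i, f {i, i + 1} ≤ f {i} + f {i + 1})
    (hcyc : ∀ i, f {i, i + 1} + ∑ j ∈ univ \ {i, i + 1}, f {j}
      ≤ ∑ j ∈ univ \ {i}, f {j, j + 1}) :
    ∃ g : Finset (Fin n) → ℝ, IsPolymatroid g ∧ (∀ i, g {i} = f {i}) ∧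
      ∀ i, g {i, i + 1} = f {i, i + 1} := by
  obtain ⟨i₀, -, hmin⟩ := exists_min_image univ (edgeOverlap f) univ_nonempty
  have hsucc (k : ℕ) : i₀ + ((k + 1 : ℕ) : Fin n) = i₀ + (k : Fin n) + 1 := by
    rw [Nat.cast_succ, add_assoc]
  obtain ⟨g, hg, hg₁, hg₂, hgn⟩ := exists_path_polymatroid (n := n)
    (a := fun k => f {i₀ + (k : Fin n)}) (d := fun k => edgeOverlap f (i₀ + (k : Fin n)))
    (Nat.one_le_iff_ne_zero.2 (NeZero.ne n)) (by unfold edgeOverlap; linarith [hsub i₀])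
    (fun j => hmin _ (mem_univ _))
    (fun j => by simp only [edgeOverlap]; linarith [hright (i₀ + (j : Fin n))])
    (fun j => by simp only [edgeOverlap, hsucc]; linarith [hleft (i₀ + (j : Fin n))])
    (pathExcess_le_of_cycle_ineq f i₀ hne (hcyc i₀))
  refine ⟨fun S => g (S.image (pathPos i₀)), hg.comp_image (pathPos_injective i₀), fun i => ?_,
    fun i => ?_⟩
  · simp only [image_singleton, hg₁ _ (pathPos_mem_Icc i₀ i), add_pathPos]
  · dsimp only
    rw [image_insert, image_singleton]
    by_cases h : pathPos i₀ i < n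
    · rw [pathPos_add_one h, hg₂ _ (mem_Ico.2 ⟨(mem_Icc.1 (pathPos_mem_Icc i₀ i)).1, h⟩)]
      simp only [hsucc, add_pathPos, edgeOverlap]
      ring
    · have hi : pathPos i₀ i = n := le_antisymm (mem_Icc.1 (pathPos_mem_Icc i₀ i)).2 (not_lt.1 h)
      obtain rfl := eq_of_pathPos_eq hi
      rw [hi, pathPos_add_one_self, hgn]
      simp only [Nat.cast_one, Fin.natCast_self, add_zero, edgeOverlap]
      ring

end Cycle

/-- Every partial polymatroid on the n-cycle marginal scenario satisfying the
cycle inequalities extends to a full polymatroid on `2^[n]`. -/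
theorem ncycle_partial_polymatroid_extends {n : ℕ} (hn : 3 ≤ n)
    (f : Finset (Fin n) → ℝ)
    (h2 : ∀ i : Fin n, f {i} ≤ f {i, i + ⟨1, by omega⟩})
    (h3 : ∀ i : Fin n, f {i + ⟨1, by omega⟩} ≤ f {i, i + ⟨1, by omega⟩})
    (h4 : ∀ i : Fin n, f {i, i + ⟨1, by omega⟩} ≤ f {i} + f {i + ⟨1, by omega⟩})
    (h5 : ∀ i : Fin n,
      f {i, i + ⟨1, by omega⟩} + ∑ j ∈ Finset.univ \ {i, i + ⟨1, by omega⟩}, f {j}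
        ≤ ∑ j ∈ Finset.univ \ {i}, f {j, j + ⟨1, by omega⟩}) :
    ∃ g : Finset (Fin n) → ℝ,
      g ∅ = 0 ∧ (∀ S, 0 ≤ g S) ∧
      (∀ S T : Finset (Fin n), S ⊆ T → g S ≤ g T) ∧
      (∀ S T : Finset (Fin n), g (S ∩ T) + g (S ∪ T) ≤ g S + g T) ∧
      (∀ i : Fin n, g {i} = f {i}) ∧
      (∀ i : Fin n, g {i, i + ⟨1, by omega⟩} = f {i, i + ⟨1, by omega⟩}) := by
  have : NeZero n := ⟨by omega⟩
  have hone : (⟨1, by omega⟩ : Fin n) = 1 := Fin.ext (Nat.mod_eq_of_lt (by omega)).symm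
  simp only [hone] at h2 h3 h4 h5 ⊢
  have hne : (1 : Fin n) ≠ 0 := by
    rw [← hone]; exact Fin.ne_of_val_ne one_ne_zero
  obtain ⟨g, hg, hg₁, hg₂⟩ := exists_cycle_polymatroid f hne h2 h3 h4 h5
  exact ⟨g, hg.map_empty, hg.nonneg, fun S T h => hg.mono h, hg.submodular, hg₁, hg₂⟩
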